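/- arXiv:math/0612571 — 3 statements merged into one kernel-verified Lean document; each statement's English description precedes it below -/
import Mathlib

section
/- Let q ≥ 2 be a real number and let c be a real number with 0 < c < 3/4. Then there exists ε > 0 such that for every real s with q < s < q + ε one has 3(4s − 4q − c(2q − 2)) / (2c(6s − 6q − 2c + 2cq)) < − s(2q − 2)/(s² − q). -/
/-! At `s = q` the quotient slope of the diagonal equals `-3 / (2c)` and the slope of `X` equals
`-2`, so the strict inequality holds there exactly when `c < 3/4`; both sides are continuous at
`s = q`, hence it persists for `s` slightly larger than `q`. -/

theorem exists_forall_lt_of_continuousAt_of_lt {f g : ℝ → ℝ} {a : ℝ} (hf : ContinuousAt f a)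
    (hg : ContinuousAt g a) (h : f a < g a) :
    ∃ ε > 0, ∀ s, a < s → s < a + ε → f s < g s := by
  obtain ⟨ε, hε, hball⟩ := Metric.eventually_nhds_iff.1 (hf.eventually_lt hg h)
  refine ⟨ε, hε, fun s has hsa => hball ?_⟩
  rw [Real.dist_eq, abs_lt]
  constructor <;> linarith

/-- `μ_c(𝒪_D, l_s)` for the product `C × C` of a genus `q` curve. -/
noncomputable def diagonalQuotientSlope (q c s : ℝ) : ℝ :=
  3 * (4 * s - 4 * q - c * (2 * q - 2)) / (2 * c * (6 * s - 6 * q - 2 * c + 2 * c * q))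

/-- `μ(C × C, l_s)` for a genus `q` curve `C`. -/
noncomputable def productSlope (q s : ℝ) : ℝ :=
  -(s * (2 * q - 2)) / (s ^ 2 - q)

section

variable {q c s : ℝ}

theorem continuousAt_diagonalQuotientSlope
    (h : 2 * c * (6 * s - 6 * q - 2 * c + 2 * c * q) ≠ 0) :
    ContinuousAt (diagonalQuotientSlope q c) s :=
  ContinuousAt.div (by fun_prop) (by fun_prop) h

theorem continuousAt_productSlope (h : s ^ 2 - q ≠ 0) : ContinuousAt (productSlope q) s :=
  ContinuousAt.div (by fun_prop) (by fun_prop) h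

theorem diagonalQuotientSlope_self (hc : c ≠ 0) (hq : q ≠ 1) :
    diagonalQuotientSlope q c q = -3 / (2 * c) := by
  have hden : 2 * c * (6 * q - 6 * q - 2 * c + 2 * c * q) = 2 * c * (2 * c * (q - 1)) := by ring
  unfold diagonalQuotientSlope
  rw [hden, div_eq_div_iff (by simp [hc, sub_ne_zero.2 hq]) (by simp [hc])]
  ring

theorem productSlope_self (hq₀ : q ≠ 0) (hq₁ : q ≠ 1) : productSlope q q = -2 := by
  have hq' : q - 1 ≠ 0 := sub_ne_zero.2 hq₁
  unfold productSlope
  rw [div_eq_iff (by rw [sq, ← mul_sub_one]; exact mul_ne_zero hq₀ hq')]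
  ring

end

/-- For the product surface X = C×C polarised by l_s = s f + δ′, the quotient slope of
the diagonal curve is less than the slope of X for s close to q from above:
3(4s − 4q − c(2q − 2)) / (2c(6s − 6q − 2c + 2cq)) < − s(2q − 2)/(s² − q). -/
theorem unstable_product_slope_inequality (q c : ℝ) (hq : 2 ≤ q)
    (hc0 : 0 < c) (hc1 : c < 3 / 4) :
    ∃ ε > 0, ∀ s : ℝ, q < s → s < q + ε →
      3 * (4 * s - 4 * q - c * (2 * q - 2)) /
          (2 * c * (6 * s - 6 * q - 2 * c + 2 * c * q)) <
        - (s * (2 * q - 2)) / (s ^ 2 - q) := by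
  have hq₀ : q ≠ 0 := by linarith
  have hq₁ : q ≠ 1 := by linarith
  have hden : 2 * c * (6 * q - 6 * q - 2 * c + 2 * c * q) ≠ 0 := by
    rw [show 2 * c * (6 * q - 6 * q - 2 * c + 2 * c * q) = 4 * c ^ 2 * (q - 1) by ring]
    exact (mul_pos (by positivity) (by linarith)).ne'
  have hslope : diagonalQuotientSlope q c q < productSlope q q := by
    rw [diagonalQuotientSlope_self hc0.ne' hq₁, productSlope_self hq₀ hq₁, neg_div,
      neg_lt_neg_iff, lt_div_iff₀ (by positivity)]
    linarith
  exact exists_forall_lt_of_continuousAt_of_lt (continuousAt_diagonalQuotientSlope hden)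
    (continuousAt_productSlope (by nlinarith)) hslope
end

section
/- Let q, k, G, r be real numbers with k ≥ 3, (k − 1)² < q, G ≥ 1, and r ≥ 2, and set t₀ = q/(k−1). Then there exists ε > 0 such that for every real t with t₀ ≤ t < t₀ + ε one has (r−1)((t+1)G + q − 1) / (r(t² − q)) < 3(r−1)(kG + q − 1) / (2r(3t(k−1) − (k−1)² − 2q)). -/
/-!
At `t₀ = q/(k−1)` both denominators are positive multiples of `q − (k−1)²`, and the comparison
reduces to the polynomial inequality `2(k−1)²((t₀+1)G + q − 1) < 3q(kG + q − 1)`, which holds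
because `q > (k−1)² ≥ 1`. Both sides are continuous at `t₀`, so the strict inequality persists
on a right neighbourhood of `t₀`.
-/

theorem exists_forall_Ico_lt_of_continuousAt {f g : ℝ → ℝ} {a : ℝ} (hf : ContinuousAt f a)
    (hg : ContinuousAt g a) (h : f a < g a) :
    ∃ ε > 0, ∀ t, a ≤ t → t < a + ε → f t < g t := by
  obtain ⟨u, hau, hu⟩ :=
    (nhdsGE_basis a).mem_iff.mp (nhdsWithin_le_nhds (hf.eventually_lt hg h))
  exact ⟨u - a, sub_pos.mpr hau, fun t hat htu => hu ⟨hat, by linarith⟩⟩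

namespace KodairaFibration

/- The drops `μ(X₁) − μ(X₂)` and `μ₁(𝒪_{Z₁}) − μ₁(𝒪_{Z₂})` of the two slopes, up to `O(ε)`. -/
noncomputable def slopeCorrection (q G r t : ℝ) : ℝ :=
  (r - 1) * ((t + 1) * G + q - 1) / (r * (t ^ 2 - q))

noncomputable def quotientSlopeCorrection (q k G r t : ℝ) : ℝ :=
  3 * (r - 1) * (k * G + q - 1) / (2 * r * (3 * t * (k - 1) - (k - 1) ^ 2 - 2 * q))

variable {q k G r : ℝ}

theorem continuousAt_slopeCorrection {t : ℝ} (ht : t ^ 2 ≠ q) (hr : r ≠ 0) :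
    ContinuousAt (slopeCorrection q G r) t :=
  ContinuousAt.div (by fun_prop) (by fun_prop) (mul_ne_zero hr (sub_ne_zero.mpr ht))

theorem continuousAt_quotientSlopeCorrection {t : ℝ}
    (ht : 3 * t * (k - 1) - (k - 1) ^ 2 - 2 * q ≠ 0) (hr : r ≠ 0) :
    ContinuousAt (quotientSlopeCorrection q k G r) t :=
  ContinuousAt.div continuousAt_const (by fun_prop) (by positivity)

theorem sq_div_sub_self_eq (hk : 1 < k) :
    (q / (k - 1)) ^ 2 - q = q * (q - (k - 1) ^ 2) / (k - 1) ^ 2 := by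
  have : k - 1 ≠ 0 := by linarith
  field_simp

theorem three_mul_div_mul_sub_eq (hk : 1 < k) :
    3 * (q / (k - 1)) * (k - 1) - (k - 1) ^ 2 - 2 * q = q - (k - 1) ^ 2 := by
  have : k - 1 ≠ 0 := by linarith
  field_simp
  ring

theorem two_mul_sq_mul_lt_three_mul (hk : 2 ≤ k) (hq : (k - 1) ^ 2 < q) (hG : 0 ≤ G) :
    2 * (k - 1) ^ 2 * ((q / (k - 1) + 1) * G + q - 1) < 3 * q * (k * G + q - 1) := by
  have hk1 : k - 1 ≠ 0 := by linarith
  have hexpand : 2 * (k - 1) ^ 2 * ((q / (k - 1) + 1) * G + q - 1) =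
      2 * (k - 1) * (q + (k - 1)) * G + 2 * (k - 1) ^ 2 * (q - 1) := by
    field_simp
    ring
  have hS : 0 ≤ q - (k - 1) ^ 2 := sub_nonneg.mpr hq.le
  have hq1 : 0 < q - 1 := by nlinarith
  have hq0 : 0 < q := by linarith
  have hqkG : 0 ≤ q * k * G := mul_nonneg (by positivity) hG
  -- the difference of the two sides is `(2S + qk)G + (2S + q)(q − 1)` with `S = q − (k−1)²`
  rw [hexpand]
  nlinarith [mul_nonneg hS hG, mul_nonneg hS hq1.le, mul_pos hq0 hq1]

theorem slopeCorrection_lt_quotientSlopeCorrection_at (hk : 2 ≤ k) (hq : (k - 1) ^ 2 < q)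
    (hG : 0 ≤ G) (hr : 1 < r) :
    slopeCorrection q G r (q / (k - 1)) < quotientSlopeCorrection q k G r (q / (k - 1)) := by
  have hk1 : 1 < k := by linarith
  have hS : 0 < q - (k - 1) ^ 2 := sub_pos.mpr hq
  have hq0 : 0 < q := by nlinarith
  have hc : 0 < (r - 1) / (r * (q - (k - 1) ^ 2)) := by
    have : 0 < r - 1 := sub_pos.mpr hr
    positivity
  unfold slopeCorrection quotientSlopeCorrection
  rw [sq_div_sub_self_eq hk1, three_mul_div_mul_sub_eq hk1]
  calc _ = (r - 1) / (r * (q - (k - 1) ^ 2)) *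
          ((k - 1) ^ 2 * ((q / (k - 1) + 1) * G + q - 1) / q) := by
        field_simp
    _ < (r - 1) / (r * (q - (k - 1) ^ 2)) * (3 * (k * G + q - 1) / 2) := by
        refine mul_lt_mul_of_pos_left ?_ hc
        rw [div_lt_div_iff₀ hq0 two_pos]
        linarith [two_mul_sq_mul_lt_three_mul hk hq hG]
    _ = _ := by field_simp

end KodairaFibration

/-- Comparison of the correction terms in Theorem 5.5: for t near t₀ = q/(k−1) from above,
(r−1)((t+1)G + q − 1)/(r(t² − q)) < 3(r−1)(kG + q − 1)/(2r(3t(k−1) − (k−1)² − 2q)). -/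
theorem kodaira_correction_comparison (q k G r : ℝ) (hk : 3 ≤ k)
    (hq : (k - 1) ^ 2 < q) (hG : 1 ≤ G) (hr : 2 ≤ r) :
    ∃ ε > 0, ∀ t : ℝ, q / (k - 1) ≤ t → t < q / (k - 1) + ε →
      (r - 1) * ((t + 1) * G + q - 1) / (r * (t ^ 2 - q)) <
        3 * (r - 1) * (k * G + q - 1) /
          (2 * r * (3 * t * (k - 1) - (k - 1) ^ 2 - 2 * q)) := by
  have hk1 : 1 < k := by linarith
  have hS : 0 < q - (k - 1) ^ 2 := sub_pos.mpr hq
  have hq0 : 0 < q := by nlinarith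
  have hr0 : r ≠ 0 := by linarith
  have hslope : (q / (k - 1)) ^ 2 ≠ q := by
    rw [← sub_ne_zero, KodairaFibration.sq_div_sub_self_eq hk1]
    positivity
  have hquot : 3 * (q / (k - 1)) * (k - 1) - (k - 1) ^ 2 - 2 * q ≠ 0 := by
    rw [KodairaFibration.three_mul_div_mul_sub_eq hk1]
    exact hS.ne'
  exact exists_forall_Ico_lt_of_continuousAt
    (KodairaFibration.continuousAt_slopeCorrection hslope hr0)
    (KodairaFibration.continuousAt_quotientSlopeCorrection hquot hr0)
    (KodairaFibration.slopeCorrection_lt_quotientSlopeCorrection_at (by linarith) hq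
      (by linarith) (by linarith))
end

section
/- Let q ≥ 2, r ≥ 2, G ≥ 1 be real numbers, and let c be a real number with 0 < c < 3q / (4rq + 2(r−1)(G−1)). Then there exists δ > 0 such that for every real s with q < s < q + δ one has 3(4s − 4q − c(2q−2)) / (2c(6s − 6q − 2c + 2cq)) − 3(r−1)(1−q) / (2r(3s − 3q − c(1−q))) < − s(2q−2)/(s² − q) − (r−1)((s−1)G − q + 1) / (r(s² − q)). -/
/-!
Both slopes are continuous in `s` at `s = q`, where they take the values `-3 / (2 r c)` and
`-2 - (r - 1)(G - 1) / (r q)`. Clearing the denominator `2 r c q`, the strict inequality between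
these values is exactly the bound `c (4 r q + 2 (r - 1)(G - 1)) < 3 q`, and by continuity it
persists for `s` slightly larger than `q`.
-/

/-- `μ_c(𝒪_{D₂}, l_{2,s,ε})` up to `O(ε)`. -/
noncomputable def quotientSlope (q r c s : ℝ) : ℝ :=
  3 * (4 * s - 4 * q - c * (2 * q - 2)) / (2 * c * (6 * s - 6 * q - 2 * c + 2 * c * q)) -
    3 * (r - 1) * (1 - q) / (2 * r * (3 * s - 3 * q - c * (1 - q)))

/-- `μ(X₂, l_{2,s,ε})` up to `O(ε)`. -/
noncomputable def surfaceSlope (q r G s : ℝ) : ℝ :=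
  - (s * (2 * q - 2)) / (s ^ 2 - q) - (r - 1) * ((s - 1) * G - q + 1) / (r * (s ^ 2 - q))

theorem exists_pos_forall_lt_of_continuousAt {f g : ℝ → ℝ} {a : ℝ} (hf : ContinuousAt f a)
    (hg : ContinuousAt g a) (h : f a < g a) :
    ∃ δ > 0, ∀ x, a < x → x < a + δ → f x < g x := by
  obtain ⟨δ, hδ, hball⟩ := Metric.eventually_nhds_iff.mp (hf.eventually_lt hg h)
  exact ⟨δ, hδ, fun x hax hxa => hball (by rw [Real.dist_eq, abs_lt]; constructor <;> linarith)⟩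

section Slopes

variable {q r G c : ℝ}

theorem quotientSlope_self (hc : c ≠ 0) (hr : r ≠ 0) (hq : q ≠ 1) :
    quotientSlope q r c q = -3 / (2 * r * c) := by
  have hq' : q - 1 ≠ 0 := sub_ne_zero.mpr hq
  have h₁ : 6 * q - 6 * q - 2 * c + 2 * c * q = 2 * c * (q - 1) := by ring
  have h₂ : 3 * q - 3 * q - c * (1 - q) = c * (q - 1) := by ring
  unfold quotientSlope
  rw [h₁, h₂]
  field_simp
  ring

theorem surfaceSlope_self (hr : r ≠ 0) (hq₀ : q ≠ 0) (hq₁ : q ≠ 1) :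
    surfaceSlope q r G q = -2 - (r - 1) * (G - 1) / (r * q) := by
  have hq : q ^ 2 - q ≠ 0 := by
    rw [sq, ← mul_sub_one]; exact mul_ne_zero hq₀ (sub_ne_zero.mpr hq₁)
  unfold surfaceSlope
  field_simp
  ring

theorem continuousAt_quotientSlope (hc : c ≠ 0) (hr : r ≠ 0) (hq : q ≠ 1) :
    ContinuousAt (quotientSlope q r c) q := by
  have hq' : q - 1 ≠ 0 := sub_ne_zero.mpr hq
  have h₁ : 2 * c * (6 * q - 6 * q - 2 * c + 2 * c * q) ≠ 0 := by
    rw [show 6 * q - 6 * q - 2 * c + 2 * c * q = 2 * c * (q - 1) by ring]; positivity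
  have h₂ : 2 * r * (3 * q - 3 * q - c * (1 - q)) ≠ 0 := by
    rw [show 3 * q - 3 * q - c * (1 - q) = c * (q - 1) by ring]; positivity
  unfold quotientSlope
  fun_prop (disch := assumption)

theorem continuousAt_surfaceSlope {s : ℝ} (hr : r ≠ 0) (hs : s ^ 2 ≠ q) :
    ContinuousAt (surfaceSlope q r G) s := by
  have hs' : s ^ 2 - q ≠ 0 := sub_ne_zero.mpr hs
  have hr' : r * (s ^ 2 - q) ≠ 0 := mul_ne_zero hr hs'
  unfold surfaceSlope
  fun_prop (disch := assumption)

theorem quotientSlope_self_lt_surfaceSlope_self (hq : 1 < q) (hr : 0 < r) (hc : 0 < c)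
    (hcq : c * (4 * r * q + 2 * (r - 1) * (G - 1)) < 3 * q) :
    quotientSlope q r c q < surfaceSlope q r G q := by
  rw [quotientSlope_self hc.ne' hr.ne' hq.ne', surfaceSlope_self hr.ne' (by positivity) hq.ne',
    ← sub_pos]
  have key : -2 - (r - 1) * (G - 1) / (r * q) - -3 / (2 * r * c) =
      (3 * q - c * (4 * r * q + 2 * (r - 1) * (G - 1))) / (2 * r * c * q) := by
    field_simp
    ring
  rw [key]
  exact div_pos (by linarith) (by positivity)

end Slopes

theorem kodaira_diagonal_slope_inequality_general (q r G c : ℝ) (hq : 2 ≤ q) (hr : 2 ≤ r)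
    (hc0 : 0 < c)
    (hc1 : c < 3 * q / (4 * r * q + 2 * (r - 1) * (G - 1))) :
    ∃ δ > 0, ∀ s : ℝ, q < s → s < q + δ →
      3 * (4 * s - 4 * q - c * (2 * q - 2)) /
            (2 * c * (6 * s - 6 * q - 2 * c + 2 * c * q)) -
          3 * (r - 1) * (1 - q) / (2 * r * (3 * s - 3 * q - c * (1 - q))) <
        - (s * (2 * q - 2)) / (s ^ 2 - q) -
          (r - 1) * ((s - 1) * G - q + 1) / (r * (s ^ 2 - q)) := by
  have hA : 0 < 4 * r * q + 2 * (r - 1) * (G - 1) :=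
    (div_pos_iff_of_pos_left (by linarith)).mp (hc0.trans hc1)
  have hq₁ : 1 < q := by linarith
  have hr₀ : 0 < r := by linarith
  exact exists_pos_forall_lt_of_continuousAt
    (continuousAt_quotientSlope hc0.ne' hr₀.ne' hq₁.ne')
    (continuousAt_surfaceSlope hr₀.ne' (by nlinarith))
    (quotientSlope_self_lt_surfaceSlope_self hq₁ hr₀ hc0 ((lt_div_iff₀ hA).mp hc1))

/-- The numerical inequality μ_c(𝒪_{D₂}) < μ(X₂) for s close to q from above,
in the proof of Theorem 5.6. -/
theorem kodaira_diagonal_slope_inequality (q r G c : ℝ) (hq : 2 ≤ q) (hr : 2 ≤ r)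
    (hG : 1 ≤ G) (hc0 : 0 < c)
    (hc1 : c < 3 * q / (4 * r * q + 2 * (r - 1) * (G - 1))) :
    ∃ δ > 0, ∀ s : ℝ, q < s → s < q + δ →
      3 * (4 * s - 4 * q - c * (2 * q - 2)) /
            (2 * c * (6 * s - 6 * q - 2 * c + 2 * c * q)) -
          3 * (r - 1) * (1 - q) / (2 * r * (3 * s - 3 * q - c * (1 - q))) <
        - (s * (2 * q - 2)) / (s ^ 2 - q) -
          (r - 1) * ((s - 1) * G - q + 1) / (r * (s ^ 2 - q)) :=
  kodaira_diagonal_slope_inequality_general q r G c hq hr hc0 hc1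
end
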